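/- (Spectral-free interval between the diagonal entries; claim proved in Corollary 2.2.) Suppose H₁ ≠ {0} and H₂ ≠ {0}, and let c = max σ(C). If λ ∈ ℝ satisfies c < λ < min σ(A), then λ ∉ σ(M); that is, the open interval (max σ(C), min σ(A)) is contained in the resolvent set of M. -/

import Mathlib

/-!
Write `z = (x, y)` and `J = diag(1, -1)`. The off-diagonal part of
`J (M - λ) = [[A - λ, B], [-B*, λ - C]]` is skew-adjoint, so
`Re ⟪J (M - λ) z, z⟫ = ⟪(A - λ) x, x⟫ + ⟪(λ - C) y, y⟫ ≥ δ ‖z‖²`, where `δ > 0` is the distance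
from `λ` to the ends of the interval `(max σ(C), min σ(A))`. An operator whose numerical range
stays away from `0` in this way is invertible, and `J² = 1`, so `M - λ` is invertible.
-/

open ContinuousLinearMap

variable {H₁ H₂ : Type*}
  [NormedAddCommGroup H₁] [InnerProductSpace ℂ H₁] [CompleteSpace H₁]
  [NormedAddCommGroup H₂] [InnerProductSpace ℂ H₂] [CompleteSpace H₂]

/-- The block operator matrix `M(x,y) = (A x + B y, B* x + C y)` on the Hilbert-space
direct sum `H₁ ⊕ H₂` (realised as `WithLp 2 (H₁ × H₂)`). -/
noncomputable def blockOp (A : H₁ →L[ℂ] H₁) (B : H₂ →L[ℂ] H₁) (C : H₂ →L[ℂ] H₂) :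
    WithLp 2 (H₁ × H₂) →L[ℂ] WithLp 2 (H₁ × H₂) :=
  (((WithLp.prodContinuousLinearEquiv 2 ℂ H₁ H₂).symm :
      (H₁ × H₂) →L[ℂ] WithLp 2 (H₁ × H₂)) ∘L
    ((A ∘L ContinuousLinearMap.fst ℂ H₁ H₂ + B ∘L ContinuousLinearMap.snd ℂ H₁ H₂).prod
      ((ContinuousLinearMap.adjoint B) ∘L ContinuousLinearMap.fst ℂ H₁ H₂
        + C ∘L ContinuousLinearMap.snd ℂ H₁ H₂))) ∘L
    ((WithLp.prodContinuousLinearEquiv 2 ℂ H₁ H₂) :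
      WithLp 2 (H₁ × H₂) →L[ℂ] (H₁ × H₂))

open scoped InnerProductSpace

namespace ContinuousLinearMap

variable {𝕜 H : Type*} [RCLike 𝕜] [NormedAddCommGroup H]

lemma re_inner_algebraMap_apply_self [InnerProductSpace ℂ H] (t : ℝ) (x : H) :
    RCLike.re ⟪algebraMap ℝ (H →L[ℂ] H) t x, x⟫_ℂ = t * ‖x‖ ^ 2 := by
  rw [Algebra.algebraMap_eq_smul_one, smul_apply, one_apply_eq_self,
    RCLike.real_smul_eq_coe_smul (K := ℂ), inner_smul_real_left, RCLike.smul_re,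
    inner_self_eq_norm_sq]

lemma re_inner_apply_self_le_of_le [InnerProductSpace 𝕜 H] {f g : H →L[𝕜] H} (h : f ≤ g)
    (x : H) :
    RCLike.re ⟪f x, x⟫_𝕜 ≤ RCLike.re ⟪g x, x⟫_𝕜 := by
  simpa [inner_sub_left] using h.re_inner_nonneg_left x

end ContinuousLinearMap

namespace IsSelfAdjoint

variable {A : Type*} [CStarAlgebra A] [PartialOrder A] [StarOrderedRing A] {a : A}

lemma algebraMap_sInf_spectrum_le (ha : IsSelfAdjoint a) :
    algebraMap ℝ A (sInf (spectrum ℝ a)) ≤ a :=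
  algebraMap_le_of_le_spectrum (fun _ hx ↦ csInf_le (spectrum.isBounded a).bddBelow hx) ha

lemma le_algebraMap_sSup_spectrum (ha : IsSelfAdjoint a) :
    a ≤ algebraMap ℝ A (sSup (spectrum ℝ a)) :=
  le_algebraMap_of_spectrum_le (fun _ hx ↦ le_csSup (spectrum.isBounded a).bddAbove hx) ha

end IsSelfAdjoint

section BlockOp

variable (A : H₁ →L[ℂ] H₁) (B : H₂ →L[ℂ] H₁) (C : H₂ →L[ℂ] H₂)

@[simp]
lemma blockOp_apply_fst (z : WithLp 2 (H₁ × H₂)) : (blockOp A B C z).fst = A z.fst + B z.snd :=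
  rfl

@[simp]
lemma blockOp_apply_snd (z : WithLp 2 (H₁ × H₂)) :
    (blockOp A B C z).snd = adjoint B z.fst + C z.snd :=
  rfl

lemma blockOp_sub_algebraMap (t : ℝ) :
    blockOp A B C - algebraMap ℝ _ t =
      blockOp (A - algebraMap ℝ _ t) B (C - algebraMap ℝ _ t) := by
  ext z : 1
  refine WithLp.ofLp_injective 2 (Prod.ext ?_ ?_) <;>
    simp [Algebra.algebraMap_eq_smul_one] <;> abel

noncomputable def blockSign : WithLp 2 (H₁ × H₂) →L[ℂ] WithLp 2 (H₁ × H₂) :=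
  blockOp 1 0 (-1)

lemma blockSign_mul_self : (blockSign : WithLp 2 (H₁ × H₂) →L[ℂ] _) * blockSign = 1 := by
  ext z : 1
  refine WithLp.ofLp_injective 2 (Prod.ext ?_ ?_) <;> simp [blockSign]

lemma re_inner_blockSign_blockOp (z : WithLp 2 (H₁ × H₂)) :
    RCLike.re ⟪blockSign (blockOp A B C z), z⟫_ℂ =
      RCLike.re ⟪A z.fst, z.fst⟫_ℂ - RCLike.re ⟪C z.snd, z.snd⟫_ℂ := by
  have hcross : (⟪z.fst, B z.snd⟫_ℂ).re = (⟪B z.snd, z.fst⟫_ℂ).re := by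
    simpa using inner_re_symm (𝕜 := ℂ) z.fst (B z.snd)
  simp [blockSign, WithLp.prod_inner_apply, inner_add_left, adjoint_inner_left, hcross]
  ring

variable {A C}

lemma isUnit_blockOp_of_algebraMap_le {δ : ℝ} (hδ : 0 < δ) (hA : algebraMap ℝ _ δ ≤ A)
    (hC : C ≤ -algebraMap ℝ _ δ) : IsUnit (blockOp A B C) := by
  set J : WithLp 2 (H₁ × H₂) →L[ℂ] _ := blockSign
  have hJJ : J * J = 1 := blockSign_mul_self
  have hJ : IsUnit J := ⟨⟨J, J, hJJ, hJJ⟩, rfl⟩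
  have hcoercive : IsUnit (J * blockOp A B C) := by
    refine isUnit_of_forall_le_norm_inner_map _ (c := ⟨δ, hδ.le⟩) hδ fun z ↦ ?_
    have hx := re_inner_apply_self_le_of_le hA z.fst
    have hy := re_inner_apply_self_le_of_le hC z.snd
    simp only [neg_apply, inner_neg_left, map_neg, re_inner_algebraMap_apply_self] at hx hy
    calc ‖z‖ ^ 2 * δ = δ * ‖z.fst‖ ^ 2 + δ * ‖z.snd‖ ^ 2 := by
          rw [WithLp.prod_norm_sq_eq_of_L2]; ring
      _ ≤ RCLike.re ⟪A z.fst, z.fst⟫_ℂ - RCLike.re ⟪C z.snd, z.snd⟫_ℂ := by linarith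
      _ = RCLike.re ⟪(J * blockOp A B C) z, z⟫_ℂ := (re_inner_blockSign_blockOp A B C z).symm
      _ ≤ ‖⟪(J * blockOp A B C) z, z⟫_ℂ‖ := RCLike.re_le_norm _
  simpa [← mul_assoc, hJJ] using hJ.mul hcoercive

lemma notMem_spectrum_blockOp_of_algebraMap_le {a c lam : ℝ} (hA : algebraMap ℝ _ a ≤ A)
    (hC : C ≤ algebraMap ℝ _ c) (hc : c < lam) (ha : lam < a) :
    lam ∉ spectrum ℝ (blockOp A B C) := by
  set δ := min (a - lam) (lam - c)
  have hA' : algebraMap ℝ _ δ ≤ A - algebraMap ℝ _ lam := calc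
    algebraMap ℝ _ δ ≤ algebraMap ℝ _ (a - lam) := algebraMap_mono _ (min_le_left _ _)
    _ ≤ A - algebraMap ℝ _ lam := by rw [map_sub]; exact sub_le_sub_right hA _
  have hC' : C - algebraMap ℝ _ lam ≤ -algebraMap ℝ _ δ := calc
    C - algebraMap ℝ _ lam ≤ algebraMap ℝ _ (-(lam - c)) := by
      rw [neg_sub, map_sub]; exact sub_le_sub_right hC _
    _ ≤ -algebraMap ℝ _ δ := by
      rw [map_neg]; exact neg_le_neg (algebraMap_mono _ (min_le_right _ _))
  rw [spectrum.notMem_iff, ← IsUnit.neg_iff, neg_sub, blockOp_sub_algebraMap]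
  exact isUnit_blockOp_of_algebraMap_le B (lt_min (sub_pos.2 ha) (sub_pos.2 hc)) hA' hC'

end BlockOp

theorem resolvent_between_diagonal_entries
    (A : H₁ →L[ℂ] H₁) (hA : IsSelfAdjoint A)
    (C : H₂ →L[ℂ] H₂) (hC : IsSelfAdjoint C) (B : H₂ →L[ℂ] H₁)
    (lam : ℝ) (h1 : sSup (spectrum ℝ C) < lam) (h2 : lam < sInf (spectrum ℝ A)) :
    lam ∉ spectrum ℝ (blockOp A B C) :=
  notMem_spectrum_blockOp_of_algebraMap_le B hA.algebraMap_sInf_spectrum_le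
    hC.le_algebraMap_sSup_spectrum h1 h2
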